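/- Suppose 1 − f(s) = g(s) for all s ∈ [0,1] and g is M-Lipschitz with values in [0,1]. Let (G_n)_{n≥0} be a sequence of finite simple graphs, each with minimum degree δ(G_n) ≥ 1, such that |V(G_n)| → ∞ and log|V(G_n)| / δ(G_n) → 0 as n → ∞. Fix ε > 0, p ∈ [0,1], and t ≥ 1. For each n, sample x^n(0) ∈ {0,1}^{V(G_n)} from the product measure with independent Bernoulli(p) coordinates and let x^n(t) be the deterministic process on G_n. Then P( max_{v∈V(G_n)} |x^n_v(t) − g^t(p)| ≤ ε ) → 1 as n → ∞, where g^t denotes the t-fold iterate of g. -/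
import Mathlib


open MeasureTheory Finset Filter

noncomputable section

/-- Real value of a Boolean state. -/
def b2r (b : Bool) : ℝ := if b then 1 else 0

/-- Neighborhood average `y_{N_v} = (deg v)⁻¹ ∑_{w ∈ N_v} y_w`. -/
def nbrAvg {V : Type} [Fintype V] (G : SimpleGraph V) [DecidableRel G.Adj]
    (y : V → ℝ) (v : V) : ℝ :=
  (∑ w ∈ G.neighborFinset v, y w) / (G.degree v : ℝ)

/-- `γ(a,b) = a(1 - f(b)) + (1 - a) g(b)`. -/
def gam (f g : ℝ → ℝ) (a b : ℝ) : ℝ := a * (1 - f b) + (1 - a) * g b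

/-- The deterministic process `x(t+1)_v = γ(x(t)_v, x(t)_{N_v})`. -/
def det {V : Type} [Fintype V] (G : SimpleGraph V) [DecidableRel G.Adj]
    (f g : ℝ → ℝ) (x0 : V → ℝ) : ℕ → V → ℝ
  | 0 => x0
  | t + 1 => fun v => gam f g (det G f g x0 t v) (nbrAvg G (det G f g x0 t) v)

/-- Product measure on `V → Bool` with independent Bernoulli(`p`) coordinates,
written out by its mass function. -/
def bernoulliProduct {V : Type} [Fintype V] [DecidableEq V] (p : ℝ) :
    Measure (V → Bool) :=
  ∑ y : V → Bool, ENNReal.ofReal (∏ v, if y v then p else 1 - p) • Measure.dirac y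

/-! ### Auxiliary analytic lemmas -/

lemma exp_le_one_add_add_sq {x : ℝ} (hx : |x| ≤ 1) : Real.exp x ≤ 1 + x + x ^ 2 := by
  have h := Real.exp_bound hx (n := 2) (by norm_num)
  have hs : ∑ m ∈ Finset.range 2, x ^ m / (m.factorial : ℝ) = 1 + x := by
    simp [Finset.sum_range_succ]
  rw [hs] at h
  have h2 : |x| ^ 2 = x ^ 2 := sq_abs x
  have h3 := (abs_sub_le_iff.mp h).1
  rw [h2] at h3
  norm_num at h3
  nlinarith [sq_nonneg x]

lemma bernoulli_mgf_le {p c : ℝ} (hp0 : 0 ≤ p) (hp1 : p ≤ 1) (hc : |c| ≤ 1) :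
    p * Real.exp (c * (1 - p)) + (1 - p) * Real.exp (c * (0 - p)) ≤ Real.exp (c ^ 2) := by
  have h1 : |c * (1 - p)| ≤ 1 := by
    rw [abs_mul, abs_of_nonneg (by linarith : (0:ℝ) ≤ 1 - p)]
    calc |c| * (1 - p) ≤ 1 * 1 := by
          apply mul_le_mul hc (by linarith) (by linarith) zero_le_one
      _ = 1 := one_mul 1
  have h2 : |c * (0 - p)| ≤ 1 := by
    rw [abs_mul, abs_of_nonpos (by linarith : (0:ℝ) - p ≤ 0)]
    calc |c| * -(0 - p) ≤ 1 * 1 := by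
          apply mul_le_mul hc (by linarith) (by linarith) zero_le_one
      _ = 1 := one_mul 1
  have e1 := exp_le_one_add_add_sq h1
  have e2 := exp_le_one_add_add_sq h2
  have e3 : 1 + c ^ 2 ≤ Real.exp (c ^ 2) := by
    have := Real.add_one_le_exp (c ^ 2); linarith
  have m1 := mul_le_mul_of_nonneg_left e1 hp0
  have m2 := mul_le_mul_of_nonneg_left e2 (by linarith : (0:ℝ) ≤ 1 - p)
  nlinarith [sq_nonneg c, mul_nonneg hp0 (by linarith : (0:ℝ) ≤ 1 - p),
    mul_nonneg (sq_nonneg c) (mul_nonneg hp0 (by linarith : (0:ℝ) ≤ 1 - p)),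
    mul_nonneg (mul_nonneg (sq_nonneg c) hp0) (mul_nonneg (by linarith : (0:ℝ) ≤ 1 - p) (by linarith : (0:ℝ) ≤ 1 - p)),
    sq_nonneg (c * (1 - 2 * p))]

/-! ### The Bernoulli product measure as a finite sum -/

open scoped Classical

/-- weight of a single coordinate -/
def bw (p : ℝ) (b : Bool) : ℝ := if b then p else 1 - p

/-- weight of a configuration -/
def BW {V : Type} [Fintype V] (p : ℝ) (y : V → Bool) : ℝ := ∏ v, bw p (y v)

/-- real-valued probability of a set of configurations -/
def realP {V : Type} [Fintype V] [DecidableEq V] (p : ℝ) (S : Set (V → Bool)) : ℝ :=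
  ∑ y : V → Bool, if y ∈ S then BW p y else 0

variable {V : Type} [Fintype V] [DecidableEq V]

lemma bw_nonneg {p : ℝ} (hp0 : 0 ≤ p) (hp1 : p ≤ 1) (b : Bool) : 0 ≤ bw p b := by
  cases b <;> simp [bw] <;> linarith

lemma BW_nonneg {p : ℝ} (hp0 : 0 ≤ p) (hp1 : p ≤ 1) (y : V → Bool) : 0 ≤ BW p y :=
  Finset.prod_nonneg fun v _ => bw_nonneg hp0 hp1 _

lemma ind_nonneg {p : ℝ} (hp0 : 0 ≤ p) (hp1 : p ≤ 1) (S : Set (V → Bool)) (y : V → Bool) :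
    0 ≤ if y ∈ S then BW p y else 0 := by
  split
  · exact BW_nonneg hp0 hp1 y
  · exact le_rfl

lemma sum_BW_mul_prod (p : ℝ) (h : V → Bool → ℝ) :
    ∑ y : V → Bool, BW p y * ∏ v, h v (y v) = ∏ v, ∑ b : Bool, bw p b * h v b := by
  rw [Fintype.prod_sum (fun v b => bw p b * h v b)]
  refine Finset.sum_congr rfl fun y _ => ?_
  rw [BW, ← Finset.prod_mul_distrib]

lemma sum_BW (p : ℝ) : ∑ y : V → Bool, BW p y = 1 := by
  have h := sum_BW_mul_prod (V := V) p (fun _ _ => 1)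
  simp only [mul_one, Finset.prod_const_one] at h
  rw [h]
  have hb : (∑ b : Bool, bw p b) = 1 := by
    rw [Fintype.sum_bool]; simp [bw]
  rw [Finset.prod_congr rfl (fun v _ => hb), Finset.prod_const_one]

lemma bernoulliProduct_toReal {p : ℝ} (hp0 : 0 ≤ p) (hp1 : p ≤ 1) (S : Set (V → Bool)) :
    (bernoulliProduct (V := V) p S).toReal = realP p S := by
  have hms : MeasurableSet S := S.toFinite.measurableSet
  have h1 : (bernoulliProduct (V := V) p) S
      = ∑ y : V → Bool, (if y ∈ S then ENNReal.ofReal (BW p y) else 0) := by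
    rw [bernoulliProduct, Measure.finset_sum_apply]
    refine Finset.sum_congr rfl fun y _ => ?_
    rw [Measure.smul_apply, smul_eq_mul, Measure.dirac_apply' _ hms]
    by_cases hy : y ∈ S
    · rw [Set.indicator_of_mem hy, Pi.one_apply, mul_one, if_pos hy]
      rfl
    · rw [Set.indicator_of_notMem hy, mul_zero, if_neg hy]
  rw [h1, ENNReal.toReal_sum]
  · refine Finset.sum_congr rfl fun y _ => ?_
    by_cases hy : y ∈ S
    · rw [if_pos hy, if_pos hy, ENNReal.toReal_ofReal (BW_nonneg hp0 hp1 y)]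
    · rw [if_neg hy, if_neg hy, ENNReal.toReal_zero]
  · intro y _
    split
    · exact ENNReal.ofReal_ne_top
    · exact ENNReal.zero_ne_top

lemma realP_nonneg {p : ℝ} (hp0 : 0 ≤ p) (hp1 : p ≤ 1) (S : Set (V → Bool)) :
    0 ≤ realP p S :=
  Finset.sum_nonneg fun y _ => ind_nonneg hp0 hp1 S y

lemma realP_compl {p : ℝ} (S : Set (V → Bool)) :
    realP p S = 1 - realP p Sᶜ := by
  have h : realP p S + realP p Sᶜ = 1 := by
    rw [realP, realP, ← Finset.sum_add_distrib, ← sum_BW (V := V) p]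
    refine Finset.sum_congr rfl fun y _ => ?_
    by_cases hy : y ∈ S
    · rw [if_pos hy, if_neg (by simp [hy]), add_zero]
    · rw [if_neg hy, if_pos (by simp [hy]), zero_add]
  linarith

lemma realP_le_one {p : ℝ} (hp0 : 0 ≤ p) (hp1 : p ≤ 1) (S : Set (V → Bool)) :
    realP p S ≤ 1 := by
  rw [realP_compl]
  have := realP_nonneg (V := V) hp0 hp1 Sᶜ
  linarith

lemma realP_mono {p : ℝ} (hp0 : 0 ≤ p) (hp1 : p ≤ 1) {S T : Set (V → Bool)} (h : S ⊆ T) :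
    realP p S ≤ realP p T := by
  apply Finset.sum_le_sum
  intro y _
  by_cases hy : y ∈ S
  · rw [if_pos hy, if_pos (h hy)]
  · rw [if_neg hy]
    exact ind_nonneg hp0 hp1 T y

lemma realP_union_le {p : ℝ} (hp0 : 0 ≤ p) (hp1 : p ≤ 1) (S T : Set (V → Bool)) :
    realP p (S ∪ T) ≤ realP p S + realP p T := by
  rw [realP, realP, realP, ← Finset.sum_add_distrib]
  apply Finset.sum_le_sum
  intro y _
  by_cases hS : y ∈ S
  · rw [if_pos (Set.mem_union_left _ hS), if_pos hS]
    have := ind_nonneg hp0 hp1 T y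
    linarith
  · by_cases hT : y ∈ T
    · rw [if_pos (Set.mem_union_right _ hT), if_neg hS, if_pos hT, zero_add]
    · rw [if_neg (by simp [hS, hT]), if_neg hS, if_neg hT, add_zero]

lemma realP_iUnion_le {p : ℝ} (hp0 : 0 ≤ p) (hp1 : p ≤ 1) (B : V → Set (V → Bool)) :
    realP p (⋃ v, B v) ≤ ∑ v : V, realP p (B v) := by
  calc realP p (⋃ v, B v)
      ≤ ∑ y : V → Bool, ∑ v : V, (if y ∈ B v then BW p y else 0) := by
        apply Finset.sum_le_sum
        intro y _
        by_cases hy : y ∈ ⋃ v, B v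
        · rw [if_pos hy]
          obtain ⟨v, hv⟩ := Set.mem_iUnion.mp hy
          calc BW p y = (if y ∈ B v then BW p y else 0) := by rw [if_pos hv]
            _ ≤ ∑ v : V, (if y ∈ B v then BW p y else 0) :=
                Finset.single_le_sum (fun v _ => ind_nonneg hp0 hp1 (B v) y) (Finset.mem_univ v)
        · rw [if_neg hy]
          exact Finset.sum_nonneg fun v _ => ind_nonneg hp0 hp1 (B v) y
    _ = ∑ v : V, realP p (B v) := Finset.sum_comm

/-! ### Chernoff bound -/

lemma chernoff {p : ℝ} (hp0 : 0 ≤ p) (hp1 : p ≤ 1) (N : Finset V) (c a : ℝ) (hc : |c| ≤ 1) :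
    realP p {y : V → Bool | a ≤ ∑ u ∈ N, c * (b2r (y u) - p)}
      ≤ Real.exp (-a) * Real.exp (c ^ 2 * N.card) := by
  have key : ∀ y : V → Bool,
      Real.exp (∑ u ∈ N, c * (b2r (y u) - p)) = ∏ v : V, (if v ∈ N then Real.exp (c * (b2r (y v) - p)) else 1) := by
    intro y
    rw [Real.exp_sum]
    rw [← Finset.prod_filter (· ∈ N) (fun u => Real.exp (c * (b2r (y u) - p)))]
    congr 1
    simp
  calc realP p {y : V → Bool | a ≤ ∑ u ∈ N, c * (b2r (y u) - p)}
      ≤ ∑ y : V → Bool, BW p y * Real.exp (∑ u ∈ N, c * (b2r (y u) - p) - a) := by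
        apply Finset.sum_le_sum
        intro y _
        by_cases hy : y ∈ {y : V → Bool | a ≤ ∑ u ∈ N, c * (b2r (y u) - p)}
        · rw [if_pos hy]
          have hmem : a ≤ ∑ u ∈ N, c * (b2r (y u) - p) := hy
          have h1 : (1:ℝ) ≤ Real.exp (∑ u ∈ N, c * (b2r (y u) - p) - a) :=
            Real.one_le_exp (by linarith)
          calc BW p y = BW p y * 1 := (mul_one _).symm
            _ ≤ BW p y * Real.exp (∑ u ∈ N, c * (b2r (y u) - p) - a) :=
                mul_le_mul_of_nonneg_left h1 (BW_nonneg hp0 hp1 y)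
        · rw [if_neg hy]
          exact mul_nonneg (BW_nonneg hp0 hp1 y) (Real.exp_pos _).le
    _ = Real.exp (-a) * ∑ y : V → Bool, BW p y * Real.exp (∑ u ∈ N, c * (b2r (y u) - p)) := by
        rw [Finset.mul_sum]
        refine Finset.sum_congr rfl fun y _ => ?_
        rw [sub_eq_add_neg, Real.exp_add]
        ring
    _ = Real.exp (-a) * ∏ v : V, ∑ b : Bool, bw p b * (if v ∈ N then Real.exp (c * (b2r b - p)) else 1) := by
        congr 1
        rw [← sum_BW_mul_prod p (fun v b => if v ∈ N then Real.exp (c * (b2r b - p)) else 1)]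
        refine Finset.sum_congr rfl fun y _ => ?_
        rw [key y]
    _ ≤ Real.exp (-a) * Real.exp (c ^ 2 * N.card) := by
        apply mul_le_mul_of_nonneg_left _ (Real.exp_pos _).le
        have hterm : ∀ v : V, (∑ b : Bool, bw p b * (if v ∈ N then Real.exp (c * (b2r b - p)) else 1))
            = if v ∈ N then p * Real.exp (c * (1 - p)) + (1 - p) * Real.exp (c * (0 - p)) else 1 := by
          intro v
          by_cases hv : v ∈ N <;> simp [hv, bw, b2r, Fintype.sum_bool] <;> ring
        calc (∏ v : V, ∑ b : Bool, bw p b * (if v ∈ N then Real.exp (c * (b2r b - p)) else 1))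
            = ∏ v : V, (if v ∈ N then p * Real.exp (c * (1 - p)) + (1 - p) * Real.exp (c * (0 - p)) else 1) := by
              exact Finset.prod_congr rfl fun v _ => hterm v
          _ = ∏ v ∈ N, (p * Real.exp (c * (1 - p)) + (1 - p) * Real.exp (c * (0 - p))) := by
              rw [← Finset.prod_filter]
              congr 1
              simp
          _ ≤ ∏ v ∈ N, Real.exp (c ^ 2) := by
              apply Finset.prod_le_prod
              · intro v _
                have e1 := Real.exp_pos (c * (1 - p))
                have e2 := Real.exp_pos (c * (0 - p))
                nlinarith
              · intro v _
                exact bernoulli_mgf_le hp0 hp1 hc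
          _ = Real.exp (c ^ 2 * N.card) := by
              rw [Finset.prod_const, mul_comm, Real.exp_nat_mul]

/-! ### Tail bound for the neighbourhood average -/

lemma nbrAvg_tail {p : ℝ} (hp0 : 0 ≤ p) (hp1 : p ≤ 1)
    (G : SimpleGraph V) [DecidableRel G.Adj] (v : V) (hd : 0 < G.degree v)
    {δ : ℝ} (hδ0 : 0 < δ) (hδ2 : δ ≤ 2) :
    realP p {y : V → Bool | δ < |nbrAvg G (fun u => b2r (y u)) v - p|}
      ≤ 2 * Real.exp (-(δ ^ 2 / 4) * G.degree v) := by
  set N := G.neighborFinset v with hN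
  have hcard : (N.card : ℝ) = (G.degree v : ℝ) := by
    rw [hN]; norm_cast
  set d : ℝ := (G.degree v : ℝ) with hdd
  have hdpos : 0 < d := by positivity
  set lam : ℝ := δ / 2 with hlam
  have hlam0 : 0 < lam := by positivity
  have hlam1 : |lam| ≤ 1 := by rw [abs_of_pos hlam0]; linarith
  have hlamn1 : |(-lam)| ≤ 1 := by rw [abs_neg]; exact hlam1
  -- the two tail events
  set A : Set (V → Bool) := {y | lam * (d * δ) ≤ ∑ u ∈ N, lam * (b2r (y u) - p)} with hA
  set B : Set (V → Bool) := {y | lam * (d * δ) ≤ ∑ u ∈ N, (-lam) * (b2r (y u) - p)} with hB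
  have hsub : {y : V → Bool | δ < |nbrAvg G (fun u => b2r (y u)) v - p|} ⊆ A ∪ B := by
    intro y hy
    simp only [Set.mem_setOf_eq] at hy
    have havg : nbrAvg G (fun u => b2r (y u)) v - p = (∑ u ∈ N, (b2r (y u) - p)) / d := by
      rw [nbrAvg, Finset.sum_sub_distrib, Finset.sum_const, nsmul_eq_mul, ← hN, ← hdd, hcard]
      field_simp
    rw [havg, abs_div, abs_of_pos hdpos, lt_div_iff₀ hdpos] at hy
    have h2 : d * δ ≤ |∑ u ∈ N, (b2r (y u) - p)| := by
      rw [mul_comm] at hy; linarith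
    rcases le_abs.mp h2 with h3 | h3
    · left
      rw [hA, Set.mem_setOf_eq, ← Finset.mul_sum]
      exact mul_le_mul_of_nonneg_left h3 hlam0.le
    · right
      rw [hB, Set.mem_setOf_eq]
      have heq : ∑ u ∈ N, (-lam) * (b2r (y u) - p) = lam * (- ∑ u ∈ N, (b2r (y u) - p)) := by
        rw [← Finset.sum_neg_distrib, Finset.mul_sum]
        refine Finset.sum_congr rfl fun u _ => by ring
      rw [heq]
      exact mul_le_mul_of_nonneg_left (by linarith) hlam0.le
  have hAbound := chernoff hp0 hp1 N lam (lam * (d * δ)) hlam1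
  have hBbound := chernoff hp0 hp1 N (-lam) (lam * (d * δ)) hlamn1
  have hexp : Real.exp (-(lam * (d * δ))) * Real.exp (lam ^ 2 * N.card)
      = Real.exp (-(δ ^ 2 / 4) * d) := by
    rw [← Real.exp_add, hcard]
    congr 1
    rw [hlam]; ring
  have hexp2 : Real.exp (-(lam * (d * δ))) * Real.exp ((-lam) ^ 2 * N.card)
      = Real.exp (-(δ ^ 2 / 4) * d) := by
    rw [← Real.exp_add, hcard]
    congr 1
    rw [hlam]; ring
  calc realP p {y : V → Bool | δ < |nbrAvg G (fun u => b2r (y u)) v - p|}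
      ≤ realP p (A ∪ B) := realP_mono hp0 hp1 hsub
    _ ≤ realP p A + realP p B := realP_union_le hp0 hp1 A B
    _ ≤ Real.exp (-(lam * (d * δ))) * Real.exp (lam ^ 2 * N.card)
          + Real.exp (-(lam * (d * δ))) * Real.exp ((-lam) ^ 2 * N.card) :=
        add_le_add hAbound hBbound
    _ = 2 * Real.exp (-(δ ^ 2 / 4) * d) := by rw [hexp, hexp2]; ring

/-! ### Deterministic process lemmas -/

section Det

variable (f g : ℝ → ℝ)

lemma det_succ (G : SimpleGraph V) [DecidableRel G.Adj] (x0 : V → ℝ) (t : ℕ) (v : V) :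
    det G f g x0 (t + 1) v = gam f g (det G f g x0 t v) (nbrAvg G (det G f g x0 t) v) := rfl

lemma gam_eq_g (hfg : ∀ s ∈ Set.Icc (0:ℝ) 1, 1 - f s = g s) {a b : ℝ}
    (hb : b ∈ Set.Icc (0:ℝ) 1) : gam f g a b = g b := by
  rw [gam, hfg b hb]; ring

lemma nbrAvg_mem (G : SimpleGraph V) [DecidableRel G.Adj] (v : V) (hd : 0 < G.degree v)
    {x : V → ℝ} (hx : ∀ u, x u ∈ Set.Icc (0:ℝ) 1) :
    nbrAvg G x v ∈ Set.Icc (0:ℝ) 1 := by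
  have hdpos : (0:ℝ) < (G.degree v : ℝ) := by positivity
  have hcard : ((G.neighborFinset v).card : ℝ) = (G.degree v : ℝ) := by norm_cast
  constructor
  · apply div_nonneg _ hdpos.le
    exact Finset.sum_nonneg fun u _ => (hx u).1
  · rw [nbrAvg, div_le_one hdpos, ← hcard]
    calc (∑ u ∈ G.neighborFinset v, x u) ≤ ∑ u ∈ G.neighborFinset v, 1 :=
          Finset.sum_le_sum fun u _ => (hx u).2
      _ = ((G.neighborFinset v).card : ℝ) := by simp

lemma nbrAvg_close (G : SimpleGraph V) [DecidableRel G.Adj] (v : V) (hd : 0 < G.degree v)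
    {x : V → ℝ} {c r : ℝ} (hx : ∀ u, |x u - c| ≤ r) :
    |nbrAvg G x v - c| ≤ r := by
  have hdpos : (0:ℝ) < (G.degree v : ℝ) := by positivity
  have hcard : ((G.neighborFinset v).card : ℝ) = (G.degree v : ℝ) := by norm_cast
  have havg : nbrAvg G x v - c = (∑ u ∈ G.neighborFinset v, (x u - c)) / (G.degree v : ℝ) := by
    rw [nbrAvg, Finset.sum_sub_distrib, Finset.sum_const, nsmul_eq_mul, hcard]
    field_simp
  rw [havg, abs_div, abs_of_pos hdpos, div_le_iff₀ hdpos]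
  calc |∑ u ∈ G.neighborFinset v, (x u - c)| ≤ ∑ u ∈ G.neighborFinset v, |x u - c| :=
        Finset.abs_sum_le_sum_abs _ _
    _ ≤ ∑ u ∈ G.neighborFinset v, r := Finset.sum_le_sum fun u _ => hx u
    _ = ((G.neighborFinset v).card : ℝ) * r := by rw [Finset.sum_const, nsmul_eq_mul]
    _ = r * (G.degree v : ℝ) := by rw [hcard]; ring

lemma det_mem (hfg : ∀ s ∈ Set.Icc (0:ℝ) 1, 1 - f s = g s)
    (hg01 : ∀ a ∈ Set.Icc (0:ℝ) 1, g a ∈ Set.Icc (0:ℝ) 1)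
    (G : SimpleGraph V) [DecidableRel G.Adj] (hdeg : ∀ v : V, 0 < G.degree v)
    {x0 : V → ℝ} (hx0 : ∀ u, x0 u ∈ Set.Icc (0:ℝ) 1) :
    ∀ t, ∀ v, det G f g x0 t v ∈ Set.Icc (0:ℝ) 1 := by
  intro t
  induction t with
  | zero => exact hx0
  | succ t ih =>
      intro v
      have hb := nbrAvg_mem G v (hdeg v) ih
      rw [det_succ, gam_eq_g f g hfg hb]
      exact hg01 _ hb

lemma iterate_mem (hg01 : ∀ a ∈ Set.Icc (0:ℝ) 1, g a ∈ Set.Icc (0:ℝ) 1)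
    {a : ℝ} (ha : a ∈ Set.Icc (0:ℝ) 1) : ∀ t, g^[t] a ∈ Set.Icc (0:ℝ) 1 := by
  intro t
  induction t with
  | zero => simpa
  | succ t ih => rw [Function.iterate_succ_apply']; exact hg01 _ ih

lemma det_close (M : ℝ)
    (hfg : ∀ s ∈ Set.Icc (0:ℝ) 1, 1 - f s = g s)
    (hg01 : ∀ a ∈ Set.Icc (0:ℝ) 1, g a ∈ Set.Icc (0:ℝ) 1)
    (hgLip : ∀ a ∈ Set.Icc (0:ℝ) 1, ∀ b ∈ Set.Icc (0:ℝ) 1, |g a - g b| ≤ M * |a - b|)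
    (G : SimpleGraph V) [DecidableRel G.Adj] (hdeg : ∀ v : V, 0 < G.degree v)
    {x0 : V → ℝ} (hx0 : ∀ u, x0 u ∈ Set.Icc (0:ℝ) 1)
    {p δ : ℝ} (hp : p ∈ Set.Icc (0:ℝ) 1) (hδ0 : 0 ≤ δ)
    (hclose : ∀ v, |nbrAvg G x0 v - p| ≤ δ) :
    ∀ t, 1 ≤ t → ∀ v, |det G f g x0 t v - g^[t] p| ≤ (max M 1) ^ t * δ := by
  have hM0 : 0 ≤ M := by
    have := hgLip 0 (by norm_num) 1 (by norm_num)
    have h01 : |(0:ℝ) - 1| = 1 := by norm_num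
    rw [h01, mul_one] at this
    exact le_trans (abs_nonneg _) this
  set K := max M 1 with hK
  have hK1 : 1 ≤ K := le_max_right _ _
  have hK0 : 0 ≤ K := by linarith
  have hMK : M ≤ K := le_max_left _ _
  intro t ht
  induction t with
  | zero => omega
  | succ t ih =>
      intro v
      have hbase : ∀ s, 1 ≤ s → (∀ u, |det G f g x0 s u - g^[s] p| ≤ K ^ s * δ) →
          ∀ u, |det G f g x0 (s+1) u - g^[s+1] p| ≤ K ^ (s+1) * δ := by
        intro s hs hIH u
        have hmem := det_mem f g hfg hg01 G hdeg hx0 s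
        have hb := nbrAvg_mem G u (hdeg u) hmem
        have hgp := iterate_mem g hg01 hp s
        have hcl : |nbrAvg G (det G f g x0 s) u - g^[s] p| ≤ K ^ s * δ :=
          nbrAvg_close G u (hdeg u) hIH
        rw [det_succ, gam_eq_g f g hfg hb, Function.iterate_succ_apply']
        calc |g (nbrAvg G (det G f g x0 s) u) - g (g^[s] p)|
            ≤ M * |nbrAvg G (det G f g x0 s) u - g^[s] p| := hgLip _ hb _ hgp
          _ ≤ K * (K ^ s * δ) := by
              apply mul_le_mul hMK hcl (abs_nonneg _) hK0
          _ = K ^ (s+1) * δ := by ring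
      rcases Nat.eq_or_lt_of_le ht with h1 | h1
      · -- t + 1 = 1, i.e. t = 0
        have ht0 : t = 0 := by omega
        subst ht0
        have hmem0 : ∀ u, det G f g x0 0 u ∈ Set.Icc (0:ℝ) 1 := hx0
        have hb := nbrAvg_mem G v (hdeg v) hmem0
        rw [det_succ, gam_eq_g f g hfg hb, Function.iterate_succ_apply', Function.iterate_zero_apply]
        calc |g (nbrAvg G x0 v) - g p| ≤ M * |nbrAvg G x0 v - p| := hgLip _ hb _ hp
          _ ≤ K * (1 * δ) := by
              rw [one_mul]
              apply mul_le_mul hMK (hclose v) (abs_nonneg _) hK0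
          _ = K ^ 1 * δ := by ring
      · have ht' : 1 ≤ t := by omega
        exact hbase t ht' (ih ht') v

end Det

lemma b2r_mem (b : Bool) : b2r b ∈ Set.Icc (0:ℝ) 1 := by
  cases b <;> norm_num [b2r]

/-- Per-graph quantitative bound. -/
lemma per_graph {V : Type} [Fintype V] [DecidableEq V]
    (f g : ℝ → ℝ) (M : ℝ)
    (hfg : ∀ s ∈ Set.Icc (0:ℝ) 1, 1 - f s = g s)
    (hg01 : ∀ a ∈ Set.Icc (0:ℝ) 1, g a ∈ Set.Icc (0:ℝ) 1)
    (hgLip : ∀ a ∈ Set.Icc (0:ℝ) 1, ∀ b ∈ Set.Icc (0:ℝ) 1, |g a - g b| ≤ M * |a - b|)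
    (G : SimpleGraph V) [DecidableRel G.Adj] (hdeg : ∀ v : V, 0 < G.degree v)
    {p : ℝ} (hp0 : 0 ≤ p) (hp1 : p ≤ 1)
    {eps δ : ℝ} (hδ0 : 0 < δ) (hδ2 : δ ≤ 2) (hδeps : (max M 1) ^ t * δ ≤ eps)
    (ht : 1 ≤ t) (D : ℕ) (hD : ∀ v : V, D ≤ G.degree v) :
    1 - (Fintype.card V : ℝ) * (2 * Real.exp (-(δ ^ 2 / 4) * (D : ℝ)))
      ≤ (bernoulliProduct (V := V) p
          {x0 | ∀ v : V, |det G f g (fun w => b2r (x0 w)) t v - g^[t] p| ≤ eps}).toReal := by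
  rw [bernoulliProduct_toReal hp0 hp1]
  set S : Set (V → Bool) :=
    {x0 | ∀ v : V, |det G f g (fun w => b2r (x0 w)) t v - g^[t] p| ≤ eps} with hS
  set Bad : Set (V → Bool) :=
    ⋃ v : V, {y : V → Bool | δ < |nbrAvg G (fun u => b2r (y u)) v - p|} with hBad
  have hsub : Badᶜ ⊆ S := by
    intro y hy
    have hclose : ∀ v : V, |nbrAvg G (fun u => b2r (y u)) v - p| ≤ δ := by
      intro v
      by_contra hcon
      exact hy (Set.mem_iUnion.mpr ⟨v, lt_of_not_ge hcon⟩)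
    intro v
    have hd := det_close f g M hfg hg01 hgLip G hdeg (fun u => b2r_mem (y u))
      ⟨hp0, hp1⟩ hδ0.le hclose t ht v
    exact hd.trans hδeps
  have hBadle : realP p Bad ≤ (Fintype.card V : ℝ) * (2 * Real.exp (-(δ ^ 2 / 4) * (D : ℝ))) := by
    calc realP p Bad
        ≤ ∑ v : V, realP p {y : V → Bool | δ < |nbrAvg G (fun u => b2r (y u)) v - p|} :=
          realP_iUnion_le hp0 hp1 _
      _ ≤ ∑ v : V, 2 * Real.exp (-(δ ^ 2 / 4) * (G.degree v : ℝ)) :=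
          Finset.sum_le_sum fun v _ => nbrAvg_tail hp0 hp1 G v (hdeg v) hδ0 hδ2
      _ ≤ ∑ v : V, 2 * Real.exp (-(δ ^ 2 / 4) * (D : ℝ)) := by
          apply Finset.sum_le_sum
          intro v _
          have h1 : (D : ℝ) ≤ (G.degree v : ℝ) := by exact_mod_cast hD v
          have h2 : -(δ ^ 2 / 4) * (G.degree v : ℝ) ≤ -(δ ^ 2 / 4) * (D : ℝ) := by
            nlinarith [sq_nonneg δ]
          have h3 := Real.exp_le_exp.mpr h2
          linarith
      _ = (Fintype.card V : ℝ) * (2 * Real.exp (-(δ ^ 2 / 4) * (D : ℝ))) := by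
          rw [Finset.sum_const, nsmul_eq_mul, Finset.card_univ]
  calc 1 - (Fintype.card V : ℝ) * (2 * Real.exp (-(δ ^ 2 / 4) * (D : ℝ)))
      ≤ 1 - realP p Bad := by linarith
    _ = realP p Badᶜ := by rw [realP_compl Badᶜ, compl_compl]
    _ ≤ realP p S := realP_mono hp0 hp1 hsub

/-- **Proposition (Diagonal Concentration — qualitative)**. -/
theorem diagonal_concentration_qualitative
    (f g : ℝ → ℝ) (M : ℝ)
    (hfg : ∀ s ∈ Set.Icc (0:ℝ) 1, 1 - f s = g s)
    (hg01 : ∀ a ∈ Set.Icc (0:ℝ) 1, g a ∈ Set.Icc (0:ℝ) 1)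
    (hgLip : ∀ a ∈ Set.Icc (0:ℝ) 1, ∀ b ∈ Set.Icc (0:ℝ) 1, |g a - g b| ≤ M * |a - b|)
    (V : ℕ → Type) [∀ n, Fintype (V n)] [∀ n, DecidableEq (V n)] [∀ n, Nonempty (V n)]
    (G : ∀ n, SimpleGraph (V n)) [∀ n, DecidableRel (G n).Adj]
    (hdeg : ∀ n, ∀ v : V n, 0 < (G n).degree v)
    (hcard : Tendsto (fun n => Fintype.card (V n)) atTop atTop)
    (hlogdeg : Tendsto
      (fun n => Real.log (Fintype.card (V n)) /
        ((Finset.univ.inf' Finset.univ_nonempty fun v : V n => (G n).degree v : ℕ) : ℝ))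
      atTop (nhds 0))
    (eps : ℝ) (heps : 0 < eps) (p : ℝ) (hp : p ∈ Set.Icc (0:ℝ) 1) (t : ℕ) (ht : 1 ≤ t) :
    Tendsto
      (fun n => (bernoulliProduct (V := V n) p
        {x0 | ∀ v : V n, |det (G n) f g (fun w => b2r (x0 w)) t v - g^[t] p| ≤ eps}).toReal)
      atTop (nhds 1) := by
  obtain ⟨hp0, hp1⟩ := hp
  have hK1 : (1:ℝ) ≤ max M 1 := le_max_right _ _
  have hKt : (0:ℝ) < (max M 1) ^ t := pow_pos (by linarith) t
  set δ : ℝ := min (eps / (max M 1) ^ t) 1 with hδdef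
  have hδ0 : 0 < δ := lt_min (div_pos heps hKt) one_pos
  have hδ2 : δ ≤ 2 := (min_le_right _ _).trans one_le_two
  have hδeps : (max M 1) ^ t * δ ≤ eps := by
    calc (max M 1) ^ t * δ ≤ (max M 1) ^ t * (eps / (max M 1) ^ t) :=
          mul_le_mul_of_nonneg_left (min_le_left _ _) hKt.le
      _ = eps := by field_simp
  -- the minimum degree, as a function of n
  have hDle : ∀ n (v : V n),
      (Finset.univ.inf' Finset.univ_nonempty fun v : V n => (G n).degree v) ≤ (G n).degree v :=
    fun n v => Finset.inf'_le _ (Finset.mem_univ v)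
  have hD1 : ∀ n, 1 ≤ (Finset.univ.inf' Finset.univ_nonempty fun v : V n => (G n).degree v) := by
    intro n
    obtain ⟨v, -, hv⟩ := Finset.exists_mem_eq_inf' (Finset.univ_nonempty)
      (fun v : V n => (G n).degree v)
    rw [hv]
    exact hdeg n v
  -- lower bound function
  set lo : ℕ → ℝ := fun n => 1 - (Fintype.card (V n) : ℝ) *
      (2 * Real.exp (-(δ ^ 2 / 4) *
        ((Finset.univ.inf' Finset.univ_nonempty fun v : V n => (G n).degree v : ℕ) : ℝ))) with hlo
  have hlow : ∀ n, lo n ≤ (bernoulliProduct (V := V n) p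
      {x0 | ∀ v : V n, |det (G n) f g (fun w => b2r (x0 w)) t v - g^[t] p| ≤ eps}).toReal := by
    intro n
    exact per_graph f g M hfg hg01 hgLip (G n) (hdeg n) hp0 hp1 hδ0 hδ2 hδeps ht _ (hDle n)
  have hhigh : ∀ n, (bernoulliProduct (V := V n) p
      {x0 | ∀ v : V n, |det (G n) f g (fun w => b2r (x0 w)) t v - g^[t] p| ≤ eps}).toReal ≤ 1 := by
    intro n
    rw [bernoulliProduct_toReal hp0 hp1]
    exact realP_le_one hp0 hp1 _
  -- the lower bound tends to 1
  have hcardR : Tendsto (fun n => (Fintype.card (V n) : ℝ)) atTop atTop :=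
    tendsto_natCast_atTop_atTop.comp hcard
  have h2inv : Tendsto (fun n => 2 * ((Fintype.card (V n) : ℝ))⁻¹) atTop (nhds 0) := by
    have h := (tendsto_inv_atTop_zero.comp hcardR).const_mul (2:ℝ)
    simpa using h
  have hbound0 : Tendsto (fun n => (Fintype.card (V n) : ℝ) *
      (2 * Real.exp (-(δ ^ 2 / 4) *
        ((Finset.univ.inf' Finset.univ_nonempty fun v : V n => (G n).degree v : ℕ) : ℝ))))
      atTop (nhds 0) := by
    apply tendsto_of_tendsto_of_tendsto_of_le_of_le' tendsto_const_nhds h2inv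
    · exact Eventually.of_forall fun n => by positivity
    · have hsmall := hlogdeg.eventually_lt_const (show (0:ℝ) < δ ^ 2 / 8 by positivity)
      filter_upwards [hsmall] with n hn
      set Dn : ℕ := Finset.univ.inf' Finset.univ_nonempty fun v : V n => (G n).degree v with hDn
      have hDpos : (0:ℝ) < (Dn : ℝ) := by
        have := hD1 n
        rw [← hDn] at this
        exact_mod_cast lt_of_lt_of_le one_pos (by exact_mod_cast this)
      have hcpos : (0:ℝ) < (Fintype.card (V n) : ℝ) := by
        have := Fintype.card_pos (α := V n)
        exact_mod_cast this
      have hlog : Real.log (Fintype.card (V n)) < δ ^ 2 / 8 * (Dn : ℝ) := by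
        rw [div_lt_iff₀ hDpos] at hn
        linarith
      have hexple : Real.exp (-(δ ^ 2 / 4) * (Dn : ℝ))
          ≤ Real.exp (-(2 * Real.log (Fintype.card (V n)))) := by
        apply Real.exp_le_exp.mpr
        nlinarith
      have hexpeq : Real.exp (-(2 * Real.log (Fintype.card (V n))))
          = ((Fintype.card (V n) : ℝ))⁻¹ * ((Fintype.card (V n) : ℝ))⁻¹ := by
        rw [show -(2 * Real.log (Fintype.card (V n)))
            = -Real.log (Fintype.card (V n)) + -Real.log (Fintype.card (V n)) by ring,
          Real.exp_add, Real.exp_neg, Real.exp_log hcpos]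
      have hinvle : ((Fintype.card (V n) : ℝ))⁻¹ ≤ 1 := by
        rw [inv_le_one_iff₀]
        right
        exact_mod_cast Fintype.card_pos (α := V n)
      calc (Fintype.card (V n) : ℝ) * (2 * Real.exp (-(δ ^ 2 / 4) * (Dn : ℝ)))
          ≤ (Fintype.card (V n) : ℝ) * (2 * (((Fintype.card (V n) : ℝ))⁻¹ * ((Fintype.card (V n) : ℝ))⁻¹)) := by
            rw [← hexpeq]
            have h2 : 2 * Real.exp (-(δ ^ 2 / 4) * (Dn : ℝ))
                ≤ 2 * Real.exp (-(2 * Real.log (Fintype.card (V n)))) := by linarith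
            exact mul_le_mul_of_nonneg_left h2 hcpos.le
        _ = 2 * ((Fintype.card (V n) : ℝ))⁻¹ := by
            field_simp
  have hlo_tendsto : Tendsto lo atTop (nhds 1) := by
    rw [hlo]
    have := tendsto_const_nhds (x := (1:ℝ)) (f := atTop (α := ℕ)) |>.sub hbound0
    simpa using this
  exact tendsto_of_tendsto_of_tendsto_of_le_of_le hlo_tendsto tendsto_const_nhds hlow hhigh

end
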